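/- Let (S, •, q) be a symmetric composition superalgebra and let φ be an automorphism of S with φ³ = id. Then φ is an isometry of q, and the new multiplication x ∗ y = φ(x) • φ²(y) makes (S, ∗, q) again a symmetric composition superalgebra. -/

import Mathlib

/-!
Nondegeneracy and the associativity of `b` turn the composition identities into identities
between products: `(x • y) • x = q(x) y` for even `x`, and its super-linearization
`(x • y) • z ± (z • y) • x = ± b(x, z) y` for homogeneous `x, y, z`. Applying `φ` to these with
`y = x` expresses `φ(x)` as a multiple of itself in two ways, which forces `q(φ x) = q(x)` and
`b(φ x, φ z) = b(x, z)`. Any pair of grading-preserving isometries `φ, ψ` transports the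
composition identities to `x ∗ y = φ(x) • ψ(y)`, and for `ψ = φ²` the relation `φ³ = id` makes
`b` associative for `∗`.
-/

/-- The multiplicativity identities of a composition superalgebra. -/
def IsCompositionSuper (k A : Type*) [Field k] [AddCommGroup A] [Module k A]
    (mul : A → A → A) (gr : ZMod 2 → Submodule k A)
    (bf : LinearMap.BilinForm k A) (q0 : A → k) : Prop :=
  (∀ x y : A, x ∈ gr 0 → y ∈ gr 0 → q0 (mul x y) = q0 x * q0 y) ∧
  (∀ x y z : A, x ∈ gr 0 →
      bf (mul x y) (mul x z) = q0 x * bf y z ∧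
      bf (mul y x) (mul z x) = q0 x * bf y z) ∧
  (∀ (a b c d : ZMod 2) (x y z t : A),
      x ∈ gr a → y ∈ gr b → z ∈ gr c → t ∈ gr d →
      bf (mul x y) (mul z t)
        + ((-1 : k) ^ (a.val * b.val + a.val * c.val + b.val * c.val)) *
            bf (mul z y) (mul x t)
        = ((-1 : k) ^ (b.val * c.val)) * (bf x z * bf y t))

open LinearMap (BilinForm)

theorem LinearMap.SeparatingLeft.injective {R M N P : Type*} [CommRing R] [AddCommGroup M]
    [Module R M] [AddCommMonoid N] [Module R N] [AddCommGroup P] [Module R P]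
    {B : M →ₗ[R] N →ₗ[R] P} (h : B.SeparatingLeft) : Function.Injective B :=
  LinearMap.ker_eq_bot.mp (LinearMap.separatingLeft_iff_ker_eq_bot.mp h)

theorem DirectSum.IsInternal.linearMap_ext {R M N ι : Type*} [Semiring R] [AddCommMonoid M]
    [Module R M] [AddCommMonoid N] [Module R N] [DecidableEq ι] {gr : ι → Submodule R M}
    (hint : DirectSum.IsInternal gr) {f g : M →ₗ[R] N} (h : ∀ i, ∀ x ∈ gr i, f x = g x) :
    f = g := by
  refine LinearMap.ext_on (s := ⋃ i, (gr i : Set M)) ?_ fun x hx => ?_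
  · rw [← Submodule.iSup_eq_span, hint.submodule_iSup_eq_top]
  · obtain ⟨i, hi⟩ := Set.mem_iUnion.mp hx
    exact h i x hi

theorem DirectSum.IsInternal.linearMap_ext₂ {R M N ι : Type*} [CommSemiring R] [AddCommMonoid M]
    [Module R M] [AddCommMonoid N] [Module R N] [DecidableEq ι] {gr : ι → Submodule R M}
    (hint : DirectSum.IsInternal gr) {B B' : M →ₗ[R] M →ₗ[R] N}
    (h : ∀ i j, ∀ x ∈ gr i, ∀ y ∈ gr j, B x y = B' x y) : B = B' :=
  hint.linearMap_ext fun i x hx => hint.linearMap_ext fun j y hy => h i j x hx y hy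

section

variable {k A : Type*} [Field k] [AddCommGroup A] [Module k A] {mul : A → A → A}
  {gr : ZMod 2 → Submodule k A} {bf : BilinForm k A} {q0 : A → k}

namespace IsCompositionSuper

theorem mul_mul_self_eq_smul (hcomp : IsCompositionSuper k A mul gr bf q0)
    (hsep : bf.SeparatingLeft) (hsymm : ∀ x y z, bf (mul x y) z = bf x (mul y z))
    {x : A} (hx : x ∈ gr 0) (y : A) : mul (mul x y) x = q0 x • y := by
  refine hsep.injective ?_
  ext t
  rw [hsymm, (hcomp.2.1 x y t hx).1, map_smul, LinearMap.smul_apply, smul_eq_mul]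

theorem mul_mul_add_mul_mul (hint : DirectSum.IsInternal gr)
    (hcomp : IsCompositionSuper k A mul gr bf q0) (hsep : bf.SeparatingLeft)
    (hsymm : ∀ x y z, bf (mul x y) z = bf x (mul y z)) {a b c : ZMod 2} {x y z : A}
    (hx : x ∈ gr a) (hy : y ∈ gr b) (hz : z ∈ gr c) :
    mul (mul x y) z + ((-1 : k) ^ (a.val * b.val + a.val * c.val + b.val * c.val)) •
        mul (mul z y) x = (((-1 : k) ^ (b.val * c.val)) * bf x z) • y := by
  refine hsep.injective ?_
  refine hint.linearMap_ext fun d t ht => ?_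
  have h := hcomp.2.2 a b c d x y z t hx hy hz ht
  rw [← hsymm, ← hsymm] at h
  simpa only [map_add, map_smul, LinearMap.add_apply, LinearMap.smul_apply, smul_eq_mul,
    mul_assoc] using h

theorem q0_map_eq (hcomp : IsCompositionSuper k A mul gr bf q0) (hsep : bf.SeparatingLeft)
    (hsymm : ∀ x y z, bf (mul x y) z = bf x (mul y z)) {φ : A ≃ₗ[k] A}
    (hφmul : ∀ x y, φ (mul x y) = mul (φ x) (φ y)) (hφgr : ∀ p x, x ∈ gr p → φ x ∈ gr p)
    {x : A} (hx : x ∈ gr 0) : q0 (φ x) = q0 x := by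
  by_cases h0 : x = 0
  · simp [h0]
  have h := congrArg φ (hcomp.mul_mul_self_eq_smul hsep hsymm hx x)
  rw [hφmul, hφmul, hcomp.mul_mul_self_eq_smul hsep hsymm (hφgr 0 x hx), map_smul] at h
  exact smul_left_injective k (φ.map_ne_zero_iff.mpr h0) h

theorem bf_map_map (hint : DirectSum.IsInternal gr) (hcomp : IsCompositionSuper k A mul gr bf q0)
    (hsep : bf.SeparatingLeft) (hsymm : ∀ x y z, bf (mul x y) z = bf x (mul y z))
    {φ : A ≃ₗ[k] A} (hφmul : ∀ x y, φ (mul x y) = mul (φ x) (φ y))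
    (hφgr : ∀ p x, x ∈ gr p → φ x ∈ gr p) (x y : A) : bf (φ x) (φ y) = bf x y := by
  suffices h : bf.compl₁₂ (φ : A →ₗ[k] A) (φ : A →ₗ[k] A) = bf from
    LinearMap.congr_fun₂ h x y
  refine hint.linearMap_ext₂ fun a c x hx z hz => ?_
  by_cases h0 : x = 0
  · simp [h0]
  have h := congrArg φ (hcomp.mul_mul_add_mul_mul hint hsep hsymm hx hx hz)
  simp only [map_add, map_smul, hφmul] at h
  rw [hcomp.mul_mul_add_mul_mul hint hsep hsymm (hφgr a x hx) (hφgr a x hx) (hφgr c z hz)] at h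
  exact mul_left_cancel₀ (pow_ne_zero _ (neg_ne_zero.mpr one_ne_zero))
    (smul_left_injective k (φ.map_ne_zero_iff.mpr h0) h)

theorem comp_isometry (hcomp : IsCompositionSuper k A mul gr bf q0) {φ ψ : A → A}
    (hφgr : ∀ p x, x ∈ gr p → φ x ∈ gr p) (hψgr : ∀ p x, x ∈ gr p → ψ x ∈ gr p)
    (hφbf : ∀ x y, bf (φ x) (φ y) = bf x y) (hψbf : ∀ x y, bf (ψ x) (ψ y) = bf x y)
    (hφq0 : ∀ x ∈ gr 0, q0 (φ x) = q0 x) (hψq0 : ∀ x ∈ gr 0, q0 (ψ x) = q0 x) :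
    IsCompositionSuper k A (fun x y => mul (φ x) (ψ y)) gr bf q0 := by
  obtain ⟨hq0, hbf, hsuper⟩ := hcomp
  refine ⟨fun x y hx hy => ?_, fun x y z hx => ?_, fun a b c d x y z t hx hy hz ht => ?_⟩
  · rw [hq0 _ _ (hφgr 0 x hx) (hψgr 0 y hy), hφq0 x hx, hψq0 y hy]
  · obtain ⟨hleft, -⟩ := hbf (φ x) (ψ y) (ψ z) (hφgr 0 x hx)
    obtain ⟨-, hright⟩ := hbf (ψ x) (φ y) (φ z) (hψgr 0 x hx)
    exact ⟨by rw [hleft, hφq0 x hx, hψbf], by rw [hright, hψq0 x hx, hφbf]⟩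
  · have h := hsuper a b c d (φ x) (ψ y) (φ z) (ψ t)
      (hφgr a x hx) (hψgr b y hy) (hφgr c z hz) (hψgr d t ht)
    rwa [hφbf, hψbf] at h

end IsCompositionSuper

theorem bf_mul_map_map_sq_assoc {φ : A → A}
    (hsymm : ∀ x y z, bf (mul x y) z = bf x (mul y z))
    (hφmul : ∀ x y, φ (mul x y) = mul (φ x) (φ y)) (hφbf : ∀ x y, bf (φ x) (φ y) = bf x y)
    (hφ3 : ∀ x, φ (φ (φ x)) = x) (x y z : A) :
    bf (mul (φ x) (φ (φ y))) z = bf x (mul (φ y) (φ (φ z))) :=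
  calc bf (mul (φ x) (φ (φ y))) z
      = bf (φ x) (mul (φ (φ y)) z) := hsymm _ _ _
    _ = bf (φ (φ x)) (φ (mul (φ (φ y)) z)) := (hφbf _ _).symm
    _ = bf (φ (φ x)) (mul y (φ z)) := by rw [hφmul, hφ3]
    _ = bf (mul (φ (φ x)) y) (φ z) := (hsymm _ _ _).symm
    _ = bf (φ (mul (φ (φ x)) y)) (φ (φ z)) := (hφbf _ _).symm
    _ = bf (mul x (φ y)) (φ (φ z)) := by rw [hφmul, hφ3]
    _ = bf x (mul (φ y) (φ (φ z))) := hsymm _ _ _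

end

theorem stmt6_general (k A : Type*) [Field k] [AddCommGroup A] [Module k A]
    (mul : A → A → A) (gr : ZMod 2 → Submodule k A)
    (hint : DirectSum.IsInternal gr)
    (bf : LinearMap.BilinForm k A) (q0 : A → k)
    (hnd : bf.Nondegenerate)
    (hcomp : IsCompositionSuper k A mul gr bf q0)
    (hsymm : ∀ x y z : A, bf (mul x y) z = bf x (mul y z))
    -- `φ` is an (even) automorphism of order dividing 3
    (φ : A ≃ₗ[k] A)
    (hφmul : ∀ x y, φ (mul x y) = mul (φ x) (φ y))
    (hφgr : ∀ p, Submodule.map (φ : A →ₗ[k] A) (gr p) = gr p)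
    (hφ3 : ∀ x, φ (φ (φ x)) = x) :
    -- `φ` is an isometry of `q`
    (∀ x y, bf (φ x) (φ y) = bf x y) ∧
    (∀ x ∈ gr 0, q0 (φ x) = q0 x) ∧
    -- `(S,∗,q)` is again a symmetric composition superalgebra
    IsCompositionSuper k A (fun x y => mul (φ x) (φ (φ y))) gr bf q0 ∧
    (∀ x y z : A, bf (mul (φ x) (φ (φ y))) z = bf x (mul (φ y) (φ (φ z)))) := by
  have hφmem : ∀ p x, x ∈ gr p → φ x ∈ gr p := fun p x hx =>
    hφgr p ▸ Submodule.mem_map_of_mem hx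
  have hbf := hcomp.bf_map_map hint hnd.1 hsymm hφmul hφmem
  have hq0 : ∀ x ∈ gr 0, q0 (φ x) = q0 x := fun x hx =>
    hcomp.q0_map_eq hnd.1 hsymm hφmul hφmem hx
  refine ⟨hbf, hq0, hcomp.comp_isometry hφmem (fun p x hx => hφmem p _ (hφmem p x hx)) hbf
    (fun x y => by rw [hbf, hbf]) hq0 (fun x hx => by rw [hq0 _ (hφmem 0 x hx), hq0 x hx]),
    bf_mul_map_map_sq_assoc hsymm hφmul hbf hφ3⟩

/-- If `(S,•,q)` is a symmetric composition superalgebra and `φ` an automorphism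
with `φ³ = id`, then `φ` is an isometry of `q` and `x ∗ y = φ(x) • φ²(y)` makes
`(S,∗,q)` again a symmetric composition superalgebra. -/
theorem stmt6 (k A : Type*) [Field k] [AddCommGroup A] [Module k A]
    (mul : A → A → A) (gr : ZMod 2 → Submodule k A)
    (hint : DirectSum.IsInternal gr)
    (bf : LinearMap.BilinForm k A) (q0 : A → k)
    (hadd₁ : ∀ x x' y, mul (x + x') y = mul x y + mul x' y)
    (hadd₂ : ∀ x y y', mul x (y + y') = mul x y + mul x y')
    (hsmul₁ : ∀ (c : k) x y, mul (c • x) y = c • mul x y)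
    (hsmul₂ : ∀ (c : k) x y, mul x (c • y) = c • mul x y)
    (hgrmul : ∀ (a b : ZMod 2) (x y : A), x ∈ gr a → y ∈ gr b → mul x y ∈ gr (a + b))
    (hnd : bf.Nondegenerate)
    (hcomp : IsCompositionSuper k A mul gr bf q0)
    (hsymm : ∀ x y z : A, bf (mul x y) z = bf x (mul y z))
    -- `φ` is an (even) automorphism of order dividing 3
    (φ : A ≃ₗ[k] A)
    (hφmul : ∀ x y, φ (mul x y) = mul (φ x) (φ y))
    (hφgr : ∀ p, Submodule.map (φ : A →ₗ[k] A) (gr p) = gr p)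
    (hφ3 : ∀ x, φ (φ (φ x)) = x) :
    -- `φ` is an isometry of `q`
    (∀ x y, bf (φ x) (φ y) = bf x y) ∧
    (∀ x ∈ gr 0, q0 (φ x) = q0 x) ∧
    -- `(S,∗,q)` is again a symmetric composition superalgebra
    IsCompositionSuper k A (fun x y => mul (φ x) (φ (φ y))) gr bf q0 ∧
    (∀ x y z : A, bf (mul (φ x) (φ (φ y))) z = bf x (mul (φ y) (φ (φ z)))) :=
  stmt6_general k A mul gr hint bf q0 hnd hcomp hsymm φ hφmul hφgr hφ3
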